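/- arXiv:2404.00289 — 9 statements merged into one kernel-verified Lean document; each statement's English description precedes it below -/
import Mathlib

section
/- Let A be a unital associative algebra over a field F and let R be a Rota–Baxter operator of weight 0 on A. Then the unit element 1 of A does not belong to the image of R. -/
/-- **Lemma 3(a).** If `R` is a Rota–Baxter operator of weight 0 on a unital associative
algebra `A` over a field `F`, then `1 ∉ Im(R)`. -/
theorem one_not_mem_range_rotaBaxter {F A : Type*} [Field F] [Ring A] [Algebra F A]
    [Nontrivial A]
    (R : A →ₗ[F] A) (hR : ∀ x y : A, R x * R y = R (R x * y + x * R y)) :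
    (1 : A) ∉ LinearMap.range R := by
  rintro ⟨a, ha⟩
  have h := hR a a
  simp only [ha, one_mul, mul_one, map_add] at h
  exact one_ne_zero (left_eq_add.mp h)
end

section
/- Let A be a unital associative algebra over a field F and let R be a Rota–Baxter operator of weight 0 on A. Then for every natural number n ≥ 1 one has (R(1))^n = n! · Rⁿ(1), where Rⁿ denotes the n-fold composition of R and n! is the factorial of n regarded as a scalar in F. -/
/-- **Lemma 3(c).** If `R` is a Rota–Baxter operator of weight 0 on a unital associative
algebra `A` over a field `F`, then `(R(1))ⁿ = n! · Rⁿ(1)` for every `n ≥ 1`. -/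
theorem rotaBaxter_one_pow {F A : Type*} [Field F] [Ring A] [Algebra F A]
    (R : A →ₗ[F] A) (hR : ∀ x y : A, R x * R y = R (R x * y + x * R y)) :
    ∀ n : ℕ, 1 ≤ n → (R 1) ^ n = (n.factorial : F) • ((R ^ n) 1) := by
  have hpow : ∀ n : ℕ, (R ^ (n + 1)) 1 = R ((R ^ n) 1) := by
    intro n
    rw [pow_succ']
    rfl
  have aux : ∀ n : ℕ, R 1 * (R ^ n) 1 = ((n + 1 : ℕ) : F) • (R ^ (n + 1)) 1 := by
    intro n
    induction n with
    | zero => simp [hpow]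
    | succ n ih =>
        rw [hpow n, hR, ih, one_mul, ← hpow n, map_add, map_smul]
        have h : ((n + 1 + 1 : ℕ) : F) = ((n + 1 : ℕ) : F) + 1 := by push_cast; ring
        rw [h, add_smul, one_smul, hpow (n + 1)]
  intro n hn
  induction n with
  | zero => omega
  | succ n ih =>
      rcases Nat.eq_zero_or_pos n with h0 | h1
      · subst h0; simp
      · rw [pow_succ', ih h1, mul_smul_comm, aux n, smul_smul,
          Nat.factorial_succ]
        push_cast
        ring_nf
end

section
/- Let A be a unital associative finite-dimensional algebra over a field F of characteristic zero and let R be a Rota–Baxter operator of weight 0 on A. Then the element R(1) is nilpotent, i.e., (R(1))^n = 0 for some natural number n ≥ 1. -/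
/-!
Put `r = R 1`. The Rota–Baxter identity with `x = 1` gives `r ^ (k + 1) = (k + 1) • R (r ^ k)`,
so on polynomials in `r` the operator `R` acts as integration: `q(r) = q(0) + R (q'(r))`.
Taking for `q` the antiderivative with `q(0) = 0` of the minimal polynomial of `r` gives
`q(r) = 0`, hence `q' ∣ q`. In characteristic zero a polynomial divisible by its derivative is
`c • (X - a) ^ n`, and `q(0) = 0` forces `a = 0`; thus `c • r ^ n = 0` with `c ≠ 0`.
-/

open Polynomial

namespace Polynomial

theorem coeff_X_mul_derivative {R : Type*} [Semiring R] (p : R[X]) (n : ℕ) :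
    (X * derivative p).coeff n = p.coeff n * n := by
  cases n with
  | zero => simp
  | succ n => rw [coeff_X_mul, coeff_derivative]; push_cast; rfl

variable {K : Type*} [Field K] [CharZero K]

theorem exists_derivative_eq_and_coeff_zero_eq_zero (p : K[X]) :
    ∃ q : K[X], derivative q = p ∧ q.coeff 0 = 0 := by
  induction p using Polynomial.induction_on' with
  | add p₁ p₂ h₁ h₂ =>
    obtain ⟨q₁, hq₁, hq₁0⟩ := h₁
    obtain ⟨q₂, hq₂, hq₂0⟩ := h₂
    exact ⟨q₁ + q₂, by rw [derivative_add, hq₁, hq₂], by rw [coeff_add, hq₁0, hq₂0, add_zero]⟩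
  | monomial n a =>
    refine ⟨monomial (n + 1) (a / (n + 1)), ?_, by simp [coeff_monomial]⟩
    rw [derivative_monomial]
    simp only [add_tsub_cancel_right]
    congr 1
    push_cast
    field_simp

theorem exists_natDegree_mul_eq_X_sub_C_mul_derivative {q : K[X]} (hq : derivative q ∣ q)
    (hn : q.natDegree ≠ 0) : ∃ a : K, C (q.natDegree : K) * q = (X - C a) * derivative q := by
  obtain ⟨g, hg⟩ := hq
  have hq0 : q ≠ 0 := ne_zero_of_natDegree_gt (Nat.pos_of_ne_zero hn)
  have hq'0 : derivative q ≠ 0 := derivative_ne_zero.2 hn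
  have hg0 : g ≠ 0 := by rintro rfl; rw [mul_zero] at hg; exact hq0 hg
  have hg_deg : g.natDegree = 1 := by
    have := natDegree_mul hq'0 hg0
    rw [← hg, natDegree_derivative] at this
    omega
  have hg_lc : C (q.natDegree : K) * C (g.coeff 1) = 1 := by
    have h := congrArg leadingCoeff hg
    rw [leadingCoeff_mul, leadingCoeff_derivative, mul_assoc,
      show g.leadingCoeff = g.coeff 1 by rw [leadingCoeff, hg_deg]] at h
    rw [← C_mul, mul_left_cancel₀ (leadingCoeff_ne_zero.2 hq0) (h.symm.trans (mul_one _).symm),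
      C_1]
  rw [eq_X_add_C_of_natDegree_le_one hg_deg.le] at hg
  refine ⟨-(q.natDegree * g.coeff 0), ?_⟩
  rw [C_neg, C_mul]
  linear_combination C (q.natDegree : K) * hg + (derivative q * X) * hg_lc

theorem eq_C_leadingCoeff_mul_X_sub_C_pow_of_natDegree_mul_eq {q : K[X]} {a : K}
    (h : C (q.natDegree : K) * q = (X - C a) * derivative q) :
    q = C q.leadingCoeff * (X - C a) ^ q.natDegree := by
  have hs : C (q.natDegree : K) * taylor a q = X * derivative (taylor a q) := by
    simpa [taylor_mul, taylor_apply, derivative_comp] using congrArg (taylor a) h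
  have hs_eq : taylor a q = C q.leadingCoeff * X ^ q.natDegree := by
    ext j
    have hj : (taylor a q).coeff j * q.natDegree = (taylor a q).coeff j * j := by
      rw [mul_comm, ← coeff_C_mul, hs, coeff_X_mul_derivative]
    rw [coeff_C_mul_X_pow]
    split_ifs with hjn
    · rw [hjn, coeff_taylor_natDegree]
    · by_contra hne
      exact hjn (by exact_mod_cast (mul_left_cancel₀ hne hj).symm)
  rw [← taylor_inj (r := a), hs_eq, taylor_mul, taylor_C, taylor_pow, taylor_apply, sub_comp,
    X_comp, C_comp, add_sub_cancel_right]

theorem eq_C_leadingCoeff_mul_X_pow_of_derivative_dvd {q : K[X]} (hq : derivative q ∣ q)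
    (h0 : q.coeff 0 = 0) : q = C q.leadingCoeff * X ^ q.natDegree := by
  rcases eq_or_ne q.natDegree 0 with hn | hn
  · rw [hn, pow_zero, mul_one, leadingCoeff, hn]
    exact eq_C_of_natDegree_eq_zero hn
  obtain ⟨a, ha⟩ := exists_natDegree_mul_eq_X_sub_C_mul_derivative hq hn
  have hqa := eq_C_leadingCoeff_mul_X_sub_C_pow_of_natDegree_mul_eq ha
  have ha0 : a = 0 := by
    have hlc : q.leadingCoeff ≠ 0 :=
      leadingCoeff_ne_zero.2 (ne_zero_of_natDegree_gt (Nat.pos_of_ne_zero hn))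
    rw [coeff_zero_eq_eval_zero, hqa, eval_mul, eval_C, eval_pow, eval_sub, eval_X, eval_C,
      zero_sub] at h0
    exact neg_eq_zero.1 (pow_eq_zero_iff hn |>.1 ((mul_eq_zero.1 h0).resolve_left hlc))
  rwa [ha0, C_0, sub_zero] at hqa

end Polynomial

theorem rotaBaxter_one_pow_succ {A : Type*} [Semiring A] (R : A →+ A)
    (hR : ∀ x y : A, R x * R y = R (R x * y + x * R y)) (k : ℕ) :
    R 1 ^ (k + 1) = (k + 1) • R (R 1 ^ k) := by
  induction k with
  | zero => simp
  | succ k ih =>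
    calc R 1 ^ (k + 1 + 1) = (k + 1) • (R 1 * R (R 1 ^ k)) := by
          rw [pow_succ', ih, mul_smul_comm]
      _ = (k + 1) • R (R 1 ^ (k + 1)) + R ((k + 1) • R (R 1 ^ k)) := by
          rw [hR, one_mul, ← pow_succ', map_add, smul_add, map_nsmul]
      _ = (k + 1 + 1) • R (R 1 ^ (k + 1)) := by
          rw [← ih, ← succ_nsmul]

theorem aeval_rotaBaxter_one {F A : Type*} [CommSemiring F] [Semiring A] [Algebra F A]
    (R : A →ₗ[F] A) (hR : ∀ x y : A, R x * R y = R (R x * y + x * R y)) (q : F[X]) :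
    aeval (R 1) q = algebraMap F A (q.coeff 0) + R (aeval (R 1) (derivative q)) := by
  induction q using Polynomial.induction_on' with
  | add p q hp hq =>
    rw [map_add, hp, hq, coeff_add, derivative_add, map_add, map_add, map_add]
    abel
  | monomial n a =>
    cases n with
    | zero => simp
    | succ k =>
      have h := rotaBaxter_one_pow_succ R.toAddMonoidHom hR k
      simp only [LinearMap.toAddMonoidHom_coe] at h
      rw [aeval_monomial, derivative_monomial, aeval_monomial, ← Algebra.smul_def,
        ← Algebra.smul_def, h, coeff_monomial_succ, map_zero, zero_add, add_tsub_cancel_right,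
        mul_smul, map_smul, map_smul, Nat.cast_smul_eq_nsmul]

/-- **Lemma 4.** If `R` is a Rota–Baxter operator of weight 0 on a unital associative
finite-dimensional algebra `A` over a field `F` of characteristic zero,
then `R(1)` is nilpotent. -/
theorem rotaBaxter_one_isNilpotent {F A : Type*} [Field F] [CharZero F] [Ring A] [Algebra F A]
    [FiniteDimensional F A]
    (R : A →ₗ[F] A) (hR : ∀ x y : A, R x * R y = R (R x * y + x * R y)) :
    ∃ n : ℕ, 1 ≤ n ∧ (R 1) ^ n = 0 := by
  have hint : IsIntegral F (R 1) := .of_finite F (R 1)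
  obtain ⟨q, hq', hq0⟩ := exists_derivative_eq_and_coeff_zero_eq_zero (minpoly F (R 1))
  have hqR : aeval (R 1) q = 0 := by
    rw [aeval_rotaBaxter_one R hR, hq0, hq', minpoly.aeval, map_zero, map_zero, add_zero]
  have hn : q.natDegree ≠ 0 := derivative_ne_zero.1 (hq' ▸ minpoly.ne_zero hint)
  have hq := eq_C_leadingCoeff_mul_X_pow_of_derivative_dvd (hq' ▸ minpoly.dvd F (R 1) hqR) hq0
  have hlc : q.leadingCoeff ≠ 0 :=
    leadingCoeff_ne_zero.2 (ne_zero_of_natDegree_gt (Nat.pos_of_ne_zero hn))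
  refine ⟨q.natDegree, Nat.one_le_iff_ne_zero.2 hn, ?_⟩
  rw [hq, map_mul, aeval_C, map_pow, aeval_X, ← Algebra.smul_def] at hqR
  exact (smul_eq_zero.1 hqR).resolve_left hlc
end

section
/- Let A be a unital associative finite-dimensional algebra over a field F of characteristic zero. Then there exists a natural number N such that R^N = 0 (the N-fold composition of R is the zero map) for every Rota–Baxter operator R of weight 0 on A. -/
/-!
Put `r = R 1`. The Rota–Baxter identity at `x = 1` reads `r R(x) = R(r x) + R(R x)`, that is
`[L_r, R] = R²` for the left multiplication `L_r`. On powers of `r` it gives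
`R(r^k) = r^(k+1) / (k+1)`, so `R` acts on `F[r]` as the antiderivative: the minimal polynomial of
`r` divides its own antiderivative, which forces it to be a power of `X`, and `r` is nilpotent.
Then `ad L_r` is nilpotent, while `(ad L_r)^n R = n! R^(n+1)`; so `R` is nilpotent and
`R ^ dim A = 0`.
-/

open Polynomial Finset

namespace Polynomial

variable {F : Type*} [Field F]

noncomputable def antiderivative (f : F[X]) : F[X] :=
  ∑ i ∈ range (f.natDegree + 1), C (f.coeff i / (i + 1)) * X ^ (i + 1)

theorem coeff_zero_antiderivative (f : F[X]) : f.antiderivative.coeff 0 = 0 := by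
  simp [antiderivative, coeff_X_pow]

theorem derivative_antiderivative [CharZero F] (f : F[X]) :
    derivative f.antiderivative = f := by
  conv_rhs => rw [as_sum_range_C_mul_X_pow f]
  simp only [antiderivative, derivative_sum, derivative_C_mul_X_pow, Nat.add_sub_cancel]
  refine sum_congr rfl fun i _ => ?_
  push_cast
  rw [div_mul_cancel₀ _ (Nat.cast_add_one_ne_zero i)]

theorem eq_X_pow_of_derivative_mul_eq [CharZero F] {p : F[X]} (hp : p.Monic) {c d : F}
    (hq : derivative (p * (C c * X + C d)) = p) (hq0 : (p * (C c * X + C d)).coeff 0 = 0) :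
    p = X ^ p.natDegree := by
  set m := p.natDegree
  have hpm : p.coeff m = 1 := hp.coeff_natDegree
  have hcoeff (i : ℕ) : p.coeff i = (p.coeff i * c + p.coeff (i + 1) * d) * (i + 1) := by
    have := congrArg (coeff · i) hq
    simp only [coeff_derivative, mul_add, ← mul_assoc, coeff_add, coeff_mul_X, coeff_mul_C] at this
    linear_combination -this
  have hc : c * (m + 1) = 1 := by
    simpa [hpm, coeff_eq_zero_of_natDegree_lt (Nat.lt_succ_self m)] using (hcoeff m).symm
  have hrec (i : ℕ) : ((m : F) - i) * p.coeff i = (m + 1) * (i + 1) * d * p.coeff (i + 1) := by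
    linear_combination (m + 1 : F) * hcoeff i + p.coeff i * (i + 1) * hc
  -- Multiplying `hrec` by `d` carries `d * p.coeff 0 = 0` up to `d * p.coeff m = d`.
  have hd_mul (i : ℕ) : d * p.coeff i = 0 := by
    induction i with
    | zero =>
      rw [mul_add, ← mul_assoc, coeff_add, coeff_mul_X_zero, coeff_mul_C, zero_add] at hq0
      linear_combination hq0
    | succ i ih =>
      have h : (m + 1) * (i + 1) * (d * (d * p.coeff (i + 1))) = 0 := by
        linear_combination ((m : F) - i) * ih - d * hrec i
      have h' := (mul_eq_zero.mp h).resolve_left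
        (mul_ne_zero (Nat.cast_add_one_ne_zero m) (Nat.cast_add_one_ne_zero i))
      exact mul_self_eq_zero.mp (by linear_combination p.coeff (i + 1) * h')
  have hd : d = 0 := by simpa [hpm] using hd_mul m
  ext i
  rw [coeff_X_pow]
  rcases lt_trichotomy i m with hi | rfl | hi
  · have := hrec i
    rw [hd, mul_zero, zero_mul, mul_eq_zero, sub_eq_zero, Nat.cast_inj] at this
    simpa [hi.ne] using this.resolve_left hi.ne'
  · simp [hpm]
  · simp [hi.ne', coeff_eq_zero_of_natDegree_lt hi]

theorem eq_X_pow_of_dvd_of_derivative_eq [CharZero F] {p q : F[X]} (hp : p.Monic)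
    (hpq : p ∣ q) (hq : derivative q = p) (hq0 : q.coeff 0 = 0) : p = X ^ p.natDegree := by
  obtain ⟨l, rfl⟩ := hpq
  have hl : l.natDegree ≤ 1 := by
    have hl0 : l ≠ 0 := by rintro rfl; simp [hp.ne_zero.symm] at hq
    have := congrArg natDegree hq
    rw [natDegree_derivative, hp.natDegree_mul' (by simpa using hl0)] at this
    omega
  rw [eq_X_add_C_of_natDegree_le_one hl] at hq hq0
  exact eq_X_pow_of_derivative_mul_eq hp hq hq0

end Polynomial

theorem mul_pow_sub_pow_mul_of_mul_sub_mul_eq_sq {B : Type*} [Ring B] {a b : B}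
    (hab : a * b - b * a = b ^ 2) (k : ℕ) : a * b ^ k - b ^ k * a = k • b ^ (k + 1) := by
  induction k with
  | zero => simp
  | succ k ih =>
    calc a * b ^ (k + 1) - b ^ (k + 1) * a
        = (a * b ^ k - b ^ k * a) * b + b ^ k * (a * b - b * a) := by noncomm_ring
      _ = (k + 1) • b ^ (k + 1 + 1) := by
        rw [ih, hab, smul_mul_assoc, ← pow_succ, ← pow_add, succ_nsmul]

theorem isNilpotent_of_mul_sub_mul_eq_sq {K B : Type*} [Field K] [CharZero K] [Ring B]
    [Algebra K B] {a b : B} (ha : IsNilpotent a) (hab : a * b - b * a = b ^ 2) :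
    IsNilpotent b := by
  set D := LinearMap.mulLeft K a - LinearMap.mulRight K a
  have hD (n : ℕ) : (D ^ n) b = n.factorial • b ^ (n + 1) := by
    induction n with
    | zero => simp
    | succ n ih =>
      rw [pow_succ', Module.End.mul_apply, ih, map_nsmul]
      simp only [D, LinearMap.sub_apply, LinearMap.mulLeft_apply, LinearMap.mulRight_apply,
        mul_pow_sub_pow_mul_of_mul_sub_mul_eq_sq hab, smul_smul, Nat.factorial_succ, mul_comm]
  obtain ⟨n, hn⟩ : IsNilpotent D := (LinearMap.commute_mulLeft_right a a).isNilpotent_sub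
    ((LinearMap.isNilpotent_mulLeft_iff K a).mpr ha)
    ((LinearMap.isNilpotent_mulRight_iff K a).mpr ha)
  refine ⟨n + 1, ?_⟩
  have := hD n
  rw [hn, LinearMap.zero_apply, ← Nat.cast_smul_eq_nsmul K] at this
  exact (smul_eq_zero.mp this.symm).resolve_left (Nat.cast_ne_zero.mpr n.factorial_ne_zero)

theorem IsNilpotent.pow_finrank_eq_zero {K V : Type*} [Field K] [AddCommGroup V] [Module K V]
    [FiniteDimensional K V] {f : Module.End K V} (hf : IsNilpotent f) :
    f ^ Module.finrank K V = 0 := by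
  simpa [hf.charpoly_eq_X_pow_finrank] using f.aeval_self_charpoly

section RotaBaxter

variable {F A : Type*} [Field F] [Ring A] [Algebra F A]

def IsRotaBaxter (R : A →ₗ[F] A) : Prop :=
  ∀ x y : A, R x * R y = R (R x * y + x * R y)

namespace IsRotaBaxter

variable {R : A →ₗ[F] A}

theorem map_one_mul_map (hR : IsRotaBaxter R) (x : A) :
    R 1 * R x = R (R 1 * x) + R (R x) := by
  simpa using hR 1 x

theorem mulLeft_map_one_mul_sub_mul_mulLeft (hR : IsRotaBaxter R) :
    LinearMap.mulLeft F (R 1) * R - R * LinearMap.mulLeft F (R 1) = R ^ 2 := by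
  ext x
  simp [hR.map_one_mul_map x, pow_two]

theorem succ_nsmul_map_pow_map_one (hR : IsRotaBaxter R) (k : ℕ) :
    (k + 1) • R (R 1 ^ k) = R 1 ^ (k + 1) := by
  induction k with
  | zero => simp
  | succ k ih =>
    calc (k + 1 + 1) • R (R 1 ^ (k + 1))
        = (k + 1) • R (R 1 * R 1 ^ k) + R ((k + 1) • R (R 1 ^ k)) := by
          rw [ih, ← pow_succ', succ_nsmul]
      _ = (k + 1) • (R 1 * R (R 1 ^ k)) := by rw [hR.map_one_mul_map, map_nsmul, smul_add]
      _ = R 1 ^ (k + 1 + 1) := by rw [← mul_smul_comm, ih, pow_succ' _ (k + 1)]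

theorem map_aeval_map_one [CharZero F] (hR : IsRotaBaxter R) (f : F[X]) :
    R (aeval (R 1) f) = aeval (R 1) f.antiderivative := by
  have hpow (i : ℕ) : R (R 1 ^ i) = ((i : F) + 1)⁻¹ • R 1 ^ (i + 1) := by
    rw [← hR.succ_nsmul_map_pow_map_one, ← Nat.cast_smul_eq_nsmul F, smul_smul, Nat.cast_succ,
      inv_mul_cancel₀ (Nat.cast_add_one_ne_zero i), one_smul]
  conv_lhs => rw [aeval_eq_sum_range]
  simp only [antiderivative, map_sum]
  refine sum_congr rfl fun i _ => ?_
  rw [map_smul, hpow, smul_smul, map_mul, aeval_C, map_pow, aeval_X, ← Algebra.smul_def,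
    div_eq_mul_inv]

theorem isNilpotent_map_one [CharZero F] [FiniteDimensional F A] (hR : IsRotaBaxter R) :
    IsNilpotent (R 1) := by
  have hdvd : minpoly F (R 1) ∣ (minpoly F (R 1)).antiderivative :=
    minpoly.dvd F _ (by rw [← hR.map_aeval_map_one, minpoly.aeval, map_zero])
  have hX := eq_X_pow_of_dvd_of_derivative_eq (minpoly.monic (.of_finite F _)) hdvd
    (derivative_antiderivative _) (coeff_zero_antiderivative _)
  exact ⟨_, by rw [← aeval_X_pow (R := F), ← hX, minpoly.aeval]⟩

theorem isNilpotent [CharZero F] [FiniteDimensional F A] (hR : IsRotaBaxter R) :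
    IsNilpotent R :=
  isNilpotent_of_mul_sub_mul_eq_sq (K := F)
    ((LinearMap.isNilpotent_mulLeft_iff F _).mpr hR.isNilpotent_map_one)
    hR.mulLeft_map_one_mul_sub_mul_mulLeft

end IsRotaBaxter

end RotaBaxter

/-- **Theorem 1.** For a unital associative finite-dimensional algebra `A` over a field `F`
of characteristic zero, there exists `N` such that `R^N = 0` for every Rota–Baxter operator
`R` of weight 0 on `A`. -/
theorem exists_pow_eq_zero_of_rotaBaxter {F A : Type*} [Field F] [CharZero F] [Ring A]
    [Algebra F A] [FiniteDimensional F A] :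
    ∃ N : ℕ, ∀ R : A →ₗ[F] A,
      (∀ x y : A, R x * R y = R (R x * y + x * R y)) → R ^ N = 0 :=
  ⟨Module.finrank F A, fun _ hR => (IsRotaBaxter.isNilpotent hR).pow_finrank_eq_zero⟩
end

section
/- Let F be a field of characteristic zero and let A ∈ U₃(F) be an idempotent matrix (A² = A) of rank 1. Then there exists a map φ : U₃(F) → U₃(F) which is either an algebra automorphism of U₃(F) or an antiautomorphism of U₃(F) (an F-linear bijection with φ(XY) = φ(Y)φ(X) for all X, Y) such that φ(A) = e₁₁ or φ(A) = e₂₂. -/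
/-!
For an idempotent `A ∈ U₃(F)` let `D` be its diagonal part, again idempotent. The element
`u = D A + (1 - D)(1 - A)` satisfies `D u = u A`, and it is unipotent because `A` and `D`
have the same idempotent diagonal entries; so `A` is conjugate to `D` inside `U₃(F)`.
Conjugation preserves rank, so `rank A = 1` makes `D` a single matrix unit `e_kk`. The cases
`e₁₁`, `e₂₂` are done, and `e₃₃` is sent to `e₁₁` by the antiautomorphism `X ↦ J Xᵀ J`,
`J` the exchange matrix.
-/

set_option synthInstance.maxHeartbeats 1000000
set_option maxHeartbeats 1000000

/-- The algebra of 3×3 upper-triangular matrices over `F`. -/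
def UT3 (F : Type*) [Field F] : Subalgebra F (Matrix (Fin 3) (Fin 3) F) where
  carrier := {M | ∀ i j : Fin 3, j < i → M i j = 0}
  mul_mem' := by
    intro A B hA hB i j hij
    show (A * B) i j = 0
    rw [Matrix.mul_apply]
    refine Finset.sum_eq_zero fun k _ => ?_
    rcases lt_or_ge k i with hk | hk
    · rw [hA i k hk, zero_mul]
    · rw [hB k j (lt_of_lt_of_le hij hk), mul_zero]
  one_mem' := by
    intro i j hij
    exact Matrix.one_apply_ne (fun h => absurd hij (by rw [h]; exact lt_irrefl j))
  add_mem' := by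
    intro A B hA hB i j hij
    show A i j + B i j = 0
    rw [hA i j hij, hB i j hij, add_zero]
  zero_mem' := fun i j _ => rfl
  algebraMap_mem' := by
    intro r i j hij
    show algebraMap F (Matrix (Fin 3) (Fin 3) F) r i j = 0
    rw [Matrix.algebraMap_eq_diagonal]
    exact Matrix.diagonal_apply_ne _ (fun h => absurd hij (by rw [h]; exact lt_irrefl j))

/-- The matrix unit `e_{ij}` as an element of `UT3 F`, for `i ≤ j`. -/
def eU {F : Type*} [Field F] (i j : Fin 3) (h : i ≤ j) : UT3 F :=
  ⟨Matrix.single i j 1, by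
    intro a b hba
    by_cases hia : i = a
    · by_cases hjb : j = b
      · exact absurd hba (by rw [← hia, ← hjb]; exact not_lt.mpr h)
      · exact Matrix.single_apply_of_ne _ _ _ _ _ (by tauto)
    · exact Matrix.single_apply_of_ne _ _ _ _ _ (by tauto)⟩

/-- A Rota–Baxter operator of weight zero: an `F`-linear map `R` with
`R(x)R(y) = R(R(x)y + xR(y))` for all `x, y`. -/
def IsRotaBaxterW0 {F : Type*} [Field F] {A : Type*} [Ring A] [Algebra F A]
    (R : A →ₗ[F] A) : Prop :=
  ∀ x y : A, R x * R y = R (R x * y + x * R y)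


theorem IsIdempotentElem.mul_intertwiner {R : Type*} [Ring R] {p q : R}
    (hp : IsIdempotentElem p) (hq : IsIdempotentElem q) :
    p * (p * q + (1 - p) * (1 - q)) = (p * q + (1 - p) * (1 - q)) * q := by
  have hp' : p * (1 - p) = 0 := by rw [mul_sub, mul_one, hp.eq, sub_self]
  have hq' : (1 - q) * q = 0 := by rw [sub_mul, one_mul, hq.eq, sub_self]
  rw [mul_add, add_mul, ← mul_assoc, hp.eq, ← mul_assoc, hp', zero_mul, add_zero,
    mul_assoc, hq.eq, mul_assoc (1 - p), hq', mul_zero, add_zero]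

theorem Matrix.IsUpperTriangular.mul_apply_self {m R : Type*} [LinearOrder m] [Fintype m]
    [NonUnitalNonAssocSemiring R] {M N : Matrix m m R} (hM : M.IsUpperTriangular)
    (hN : N.IsUpperTriangular) (i : m) : (M * N) i i = M i i * N i i := by
  rw [Matrix.mul_apply]
  refine Finset.sum_eq_single i (fun k _ hki => ?_) (by simp)
  rcases hki.lt_or_gt with hk | hk
  · rw [hM hk, zero_mul]
  · rw [hN hk, mul_zero]

theorem exists_eq_pi_single_one_of_card_ne_zero {m G₀ : Type*} [Fintype m] [DecidableEq m]
    [MonoidWithZero G₀] [IsLeftCancelMulZero G₀] [DecidableEq G₀] {w : m → G₀}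
    (hw : ∀ i, IsIdempotentElem (w i)) (hcard : Fintype.card {i // w i ≠ 0} = 1) :
    ∃ k, w = Pi.single k 1 := by
  obtain ⟨⟨k, hk⟩, hunique⟩ := Fintype.card_eq_one_iff.1 hcard
  refine ⟨k, funext fun i => ?_⟩
  by_cases hik : i = k
  · subst hik
    rw [Pi.single_eq_same]
    exact (IsIdempotentElem.iff_eq_zero_or_one.1 (hw i)).resolve_left hk
  · rw [Pi.single_eq_of_ne hik]
    by_contra hi
    exact hik (congrArg Subtype.val (hunique ⟨i, hi⟩))

namespace UT3

variable {F : Type*} [Field F]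

open scoped Matrix

theorem coe_mul_apply_self (X Y : UT3 F) (i : Fin 3) :
    ((X * Y : UT3 F) : Matrix (Fin 3) (Fin 3) F) i i
      = (X : Matrix (Fin 3) (Fin 3) F) i i * (Y : Matrix (Fin 3) (Fin 3) F) i i :=
  Matrix.IsUpperTriangular.mul_apply_self X.2 Y.2 i

theorem isIdempotentElem_apply_self {X : UT3 F} (hX : IsIdempotentElem X) (i : Fin 3) :
    IsIdempotentElem ((X : Matrix (Fin 3) (Fin 3) F) i i) := by
  rw [IsIdempotentElem, ← coe_mul_apply_self, hX.eq]

theorem isUnit_of_isUnit_det {X : UT3 F} (h : IsUnit (X : Matrix (Fin 3) (Fin 3) F).det) :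
    IsUnit X := by
  let _ := Matrix.invertibleOfIsUnitDet _ h
  let Y : UT3 F :=
    ⟨(X : Matrix (Fin 3) (Fin 3) F)⁻¹, Matrix.blockTriangular_inv_of_blockTriangular X.2⟩
  exact ⟨⟨X, Y, Subtype.ext (Matrix.mul_nonsing_inv _ h),
    Subtype.ext (Matrix.nonsing_inv_mul _ h)⟩, rfl⟩

theorem rank_units_conj (u : (UT3 F)ˣ) (X : UT3 F) :
    ((u * X * ↑u⁻¹ : UT3 F) : Matrix (Fin 3) (Fin 3) F).rank
      = (X : Matrix (Fin 3) (Fin 3) F).rank := by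
  have hdet (v : (UT3 F)ˣ) : IsUnit ((v : UT3 F) : Matrix (Fin 3) (Fin 3) F).det :=
    (Matrix.isUnit_iff_isUnit_det _).1 (v.isUnit.map (UT3 F).val)
  rw [Subalgebra.coe_mul, Subalgebra.coe_mul, Matrix.rank_mul_eq_left_of_isUnit_det _ _ (hdet _),
    Matrix.rank_mul_eq_right_of_isUnit_det _ _ (hdet _)]

def diagPart (X : UT3 F) : UT3 F :=
  ⟨Matrix.diagonal (X : Matrix (Fin 3) (Fin 3) F).diag, Matrix.blockTriangular_diagonal _⟩

theorem isIdempotentElem_diagPart {X : UT3 F} (hX : IsIdempotentElem X) :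
    IsIdempotentElem (diagPart X) :=
  Subtype.ext <| by
    simp only [diagPart, Subalgebra.coe_mul, Matrix.diagonal_mul_diagonal]
    exact congrArg Matrix.diagonal (funext fun i => (isIdempotentElem_apply_self hX i).eq)

theorem exists_units_conj_eq_diagPart {A : UT3 F} (hA : IsIdempotentElem A) :
    ∃ u : (UT3 F)ˣ, u * A * ↑u⁻¹ = diagPart A := by
  set D := diagPart A
  have hdiag (i : Fin 3) :
      ((D * A + (1 - D) * (1 - A) : UT3 F) : Matrix (Fin 3) (Fin 3) F) i i = 1 := by
    have ha := (isIdempotentElem_apply_self hA i).eq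
    rw [Subalgebra.coe_add, Matrix.add_apply, coe_mul_apply_self, coe_mul_apply_self]
    simp only [D, diagPart, Subalgebra.coe_sub, Subalgebra.coe_one, Matrix.sub_apply,
      Matrix.one_apply_eq, Matrix.diagonal_apply_eq, Matrix.diag_apply]
    linear_combination 2 * ha
  obtain ⟨u, hu⟩ := isUnit_of_isUnit_det (X := D * A + (1 - D) * (1 - A)) <| by
    rw [Matrix.det_of_isUpperTriangular (D * A + (1 - D) * (1 - A)).2,
      Finset.prod_eq_one fun i _ => hdiag i]
    exact isUnit_one
  refine ⟨u, (Units.mul_inv_eq_iff_eq_mul u).2 ?_⟩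
  rw [hu, (isIdempotentElem_diagPart hA).mul_intertwiner hA]

theorem diagPart_eq_eU_of_rank_eq_one {A : UT3 F} (hA : IsIdempotentElem A)
    (hrank : (A : Matrix (Fin 3) (Fin 3) F).rank = 1) :
    ∃ k, diagPart A = eU k k le_rfl := by
  classical
  obtain ⟨u, hu⟩ := exists_units_conj_eq_diagPart hA
  have hcard := rank_units_conj u A
  rw [hu, hrank, diagPart, Matrix.rank_diagonal] at hcard
  obtain ⟨k, hk⟩ :=
    exists_eq_pi_single_one_of_card_ne_zero (isIdempotentElem_apply_self hA) hcard
  exact ⟨k, Subtype.ext <| (congrArg Matrix.diagonal hk).trans (Matrix.diagonal_single _ _)⟩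

def revTranspose : UT3 F →ₗ[F] UT3 F where
  toFun X := ⟨((X : Matrix (Fin 3) (Fin 3) F).submatrix Fin.revPerm Fin.revPerm)ᵀ,
    fun _ _ h => X.2 _ _ (Fin.rev_lt_rev.2 h)⟩
  map_add' _ _ := rfl
  map_smul' _ _ := rfl

theorem coe_revTranspose (X : UT3 F) :
    (revTranspose X : Matrix (Fin 3) (Fin 3) F)
      = ((X : Matrix (Fin 3) (Fin 3) F).submatrix Fin.revPerm Fin.revPerm)ᵀ :=
  rfl

theorem revTranspose_involutive : Function.Involutive (revTranspose (F := F)) :=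
  fun X => Subtype.ext <| by ext; simp [coe_revTranspose]

theorem revTranspose_mul (X Y : UT3 F) :
    revTranspose (X * Y) = revTranspose Y * revTranspose X :=
  Subtype.ext <| by
    rw [Subalgebra.coe_mul, coe_revTranspose, coe_revTranspose, coe_revTranspose,
      ← Matrix.transpose_mul, Matrix.submatrix_mul_equiv, Subalgebra.coe_mul]

theorem revTranspose_eU (i j : Fin 3) (h : i ≤ j) :
    revTranspose (eU (F := F) i j h) = eU j.rev i.rev (Fin.rev_le_rev.2 h) :=
  Subtype.ext <| by
    ext a b
    simp [coe_revTranspose, eU, Matrix.single_apply, Fin.rev_eq_iff, and_comm]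

end UT3

/-- **Lemma 5(a).** Every rank-one idempotent of `U₃(F)` is mapped to `e₁₁` or `e₂₂` by some
automorphism or antiautomorphism of `U₃(F)`. -/
theorem idem_rank_one_conj (F : Type*) [Field F]
    (A : UT3 F) (hidem : A * A = A)
    (hrank : (A : Matrix (Fin 3) (Fin 3) F).rank = 1) :
    ∃ φ : UT3 F → UT3 F,
      ((∃ ψ : UT3 F ≃ₐ[F] UT3 F, φ = ⇑ψ) ∨
        (Function.Bijective φ ∧
          (∀ X Y : UT3 F, φ (X + Y) = φ X + φ Y) ∧
          (∀ (c : F) (X : UT3 F), φ (c • X) = c • φ X) ∧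
          (∀ X Y : UT3 F, φ (X * Y) = φ Y * φ X))) ∧
      (φ A = eU 0 0 (by decide) ∨ φ A = eU 1 1 (by decide)) := by
  obtain ⟨u, hu⟩ := UT3.exists_units_conj_eq_diagPart hidem
  obtain ⟨k, hk⟩ := UT3.diagPart_eq_eU_of_rank_eq_one hidem hrank
  let ψ : UT3 F ≃ₐ[F] UT3 F := MulSemiringAction.toAlgEquiv F (UT3 F) (ConjAct.toConjAct u)
  have hψ : ψ A = eU k k le_rfl := hu.trans hk
  fin_cases k
  · exact ⟨ψ, Or.inl ⟨ψ, rfl⟩, Or.inl hψ⟩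
  · exact ⟨ψ, Or.inl ⟨ψ, rfl⟩, Or.inr hψ⟩
  · refine ⟨UT3.revTranspose ∘ ψ,
      Or.inr ⟨UT3.revTranspose_involutive.bijective.comp ψ.bijective,
        fun X Y => ?_, fun c X => ?_, fun X Y => ?_⟩, Or.inl ?_⟩
    · simp only [Function.comp_apply, map_add]
    · simp only [Function.comp_apply, map_smul]
    · simp only [Function.comp_apply, map_mul, UT3.revTranspose_mul]
    · rw [Function.comp_apply, hψ, UT3.revTranspose_eU]
      rfl
end

section
/- Let F be a field of characteristic zero and let A ∈ U₃(F) be an idempotent matrix (A² = A) of rank 2. Then there exists a map φ : U₃(F) → U₃(F) which is either an algebra automorphism of U₃(F) or an antiautomorphism of U₃(F) (an F-linear bijection with φ(XY) = φ(Y)φ(X) for all X, Y) such that φ(A) = e₁₁ + e₂₂ or φ(A) = e₁₁ + e₃₃. -/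
set_option synthInstance.maxHeartbeats 1000000
set_option maxHeartbeats 1000000

/-!
The diagonal part `D` of an idempotent `A ∈ U₃(F)` is again idempotent, and `A - D` is strictly
upper triangular, hence nilpotent. Two idempotents `e, f` with nilpotent difference are conjugate
(by `f e + (1 - f)(1 - e)`), so `A` is conjugate inside `U₃(F)` to `D`, a diagonal `0/1` matrix of
rank two, i.e. with exactly one zero on the diagonal. Conjugation handles `diag(1,1,0)` and
`diag(1,0,1)`; `diag(0,1,1)` is sent to `diag(1,1,0)` by the reflection in the antidiagonal,
which is an antiautomorphism of `U₃(F)`.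
-/

open Matrix

namespace IsIdempotentElem

variable {R : Type*} [Ring R] {e f : R}

theorem exists_unit_conj_eq_of_isNilpotent_sub (he : IsIdempotentElem e)
    (hf : IsIdempotentElem f) (hef : IsNilpotent (e - f)) :
    ∃ u : Rˣ, ↑u * e * ↑u⁻¹ = f := by
  have he' (x : R) : e * (e * x) = e * x := by rw [← mul_assoc, he.eq]
  have hf' (x : R) : f * (f * x) = f * x := by rw [← mul_assoc, hf.eq]
  -- `u` carries `e` to `f` and `1 - e` to `1 - f`; `v` goes back, up to the unit
  -- `1 - (e - f) ^ 2`.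
  set u := f * e + (1 - f) * (1 - e)
  set v := e * f + (1 - e) * (1 - f)
  have hue : u * e = f * u := by
    simp only [u, add_mul, mul_add, mul_sub, sub_mul, mul_assoc, he.eq, hf.eq, hf', one_mul,
      mul_one]
    abel
  have huv : u * v = 1 - (e - f) ^ 2 := by
    simp only [u, v, sq, add_mul, mul_add, mul_sub, sub_mul, mul_assoc, he.eq, hf.eq, he', one_mul,
      mul_one]
    abel
  have hvu : v * u = 1 - (e - f) ^ 2 := by
    simp only [u, v, sq, add_mul, mul_add, mul_sub, sub_mul, mul_assoc, he.eq, hf.eq, hf', one_mul,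
      mul_one]
    abel
  obtain ⟨c, hc⟩ := (hef.pow_of_pos two_ne_zero).isUnit_one_sub
  have hvc : ↑c⁻¹ * v = v * ↑c⁻¹ :=
    left_inv_eq_right_inv (by rw [mul_assoc, hvu, ← hc, Units.inv_mul])
      (by rw [← mul_assoc, huv, ← hc, Units.mul_inv])
  let U : Rˣ := ⟨u, v * ↑c⁻¹, by rw [← mul_assoc, huv, ← hc, Units.mul_inv],
    by rw [← hvc, mul_assoc, hvu, ← hc, Units.inv_mul]⟩
  exact ⟨U, (Units.mul_inv_eq_iff_eq_mul U).mpr hue⟩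

end IsIdempotentElem

namespace Matrix

variable {n R : Type*} [Fintype n]

theorem IsUpperTriangular.diag_mul [LinearOrder n] [NonUnitalNonAssocSemiring R]
    {M N : Matrix n n R} (hM : M.IsUpperTriangular) (hN : N.IsUpperTriangular) :
    (M * N).diag = M.diag * N.diag := by
  ext i
  refine (Finset.sum_eq_single i (fun k _ hki => ?_) (by simp)).trans rfl
  change M i k * N k i = 0
  rcases hki.lt_or_gt with hk | hk
  · rw [hM hk, zero_mul]
  · rw [hN hk, mul_zero]

open Polynomial in
theorem IsUpperTriangular.pow_card_eq_zero [LinearOrder n] [DecidableEq n] [CommRing R]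
    {M : Matrix n n R} (hM : M.IsUpperTriangular) (hd : M.diag = 0) :
    M ^ Fintype.card n = 0 := by
  have hchar : M.charpoly = X ^ Fintype.card n := by
    simp [charpoly_of_isUpperTriangular M hM, show ∀ i, M i i = 0 from congrFun hd]
  simpa [hchar] using M.aeval_self_charpoly

theorem rank_units_conj [DecidableEq n] [CommRing R] (u : (Matrix n n R)ˣ) (M : Matrix n n R) :
    ((u : Matrix n n R) * M * (↑u⁻¹ : Matrix n n R)).rank = M.rank := by
  rw [rank_mul_eq_left_of_isUnit_det _ _ ((isUnit_iff_isUnit_det _).mp u⁻¹.isUnit),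
    rank_mul_eq_right_of_isUnit_det _ _ ((isUnit_iff_isUnit_det _).mp u.isUnit)]

theorem rank_subalgebra_units_conj [DecidableEq n] [CommRing R]
    {S : Subalgebra R (Matrix n n R)} (u : Sˣ) (x : S) :
    ((↑u * x * ↑u⁻¹ : S) : Matrix n n R).rank = (x : Matrix n n R).rank :=
  rank_units_conj (Units.map S.val.toMonoidHom u) x

theorem exists_eq_one_sub_single_of_rank_diagonal [DecidableEq n] [Field R] {d : n → R}
    (hd : IsIdempotentElem d) (hrank : (diagonal d).rank + 1 = Fintype.card n) :
    ∃ k, d = 1 - Pi.single k 1 := by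
  classical
  have hzero : Fintype.card {i // d i = 0} = 1 := by
    simp only [rank_diagonal, ne_eq, Fintype.card_subtype_compl] at hrank
    have := Fintype.card_subtype_le (fun i => d i = 0)
    omega
  obtain ⟨⟨k, hk⟩, huniq⟩ := Fintype.card_eq_one_iff.mp hzero
  refine ⟨k, funext fun i => ?_⟩
  by_cases hik : i = k
  · simp [hik, hk]
  · have hi : d i ≠ 0 := fun h => hik (congrArg Subtype.val (huniq ⟨i, h⟩))
    have := IsIdempotentElem.iff_eq_zero_or_one.mp (congrFun hd i)
    simp [hik, this.resolve_left hi]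

variable {m : ℕ}

def antitranspose (M : Matrix (Fin m) (Fin m) R) : Matrix (Fin m) (Fin m) R :=
  Mᵀ.submatrix Fin.rev Fin.rev

@[simp]
theorem antitranspose_apply (M : Matrix (Fin m) (Fin m) R) (i j : Fin m) :
    M.antitranspose i j = M j.rev i.rev := rfl

@[simp]
theorem antitranspose_antitranspose (M : Matrix (Fin m) (Fin m) R) :
    M.antitranspose.antitranspose = M := by
  ext
  simp

theorem antitranspose_mul [CommSemiring R] (M N : Matrix (Fin m) (Fin m) R) :
    (M * N).antitranspose = N.antitranspose * M.antitranspose := by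
  simp only [antitranspose, transpose_mul]
  exact (submatrix_mul_equiv _ _ _ Fin.revPerm _).symm

theorem IsUpperTriangular.antitranspose [Zero R] {M : Matrix (Fin m) (Fin m) R}
    (hM : M.IsUpperTriangular) : M.antitranspose.IsUpperTriangular :=
  fun _ _ h => hM (Fin.rev_lt_rev.mpr h)

end Matrix

namespace UT3

variable {F : Type*} [Field F]

theorem mem_iff {M : Matrix (Fin 3) (Fin 3) F} : M ∈ UT3 F ↔ M.IsUpperTriangular :=
  ⟨fun h _ _ hij => h _ _ hij, fun h _ _ hij => h hij⟩

theorem isUpperTriangular (X : UT3 F) : (X : Matrix (Fin 3) (Fin 3) F).IsUpperTriangular :=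
  mem_iff.mp X.2

def diagonal (d : Fin 3 → F) : UT3 F :=
  ⟨Matrix.diagonal d, mem_iff.mpr (blockTriangular_diagonal d)⟩

def antitranspose (X : UT3 F) : UT3 F :=
  ⟨(X : Matrix (Fin 3) (Fin 3) F).antitranspose, mem_iff.mpr (isUpperTriangular X).antitranspose⟩

theorem antitranspose_involutive : Function.Involutive (antitranspose (F := F)) :=
  fun _ => Subtype.ext (antitranspose_antitranspose _)

theorem antitranspose_add (X Y : UT3 F) :
    antitranspose (X + Y) = antitranspose X + antitranspose Y := rfl

theorem antitranspose_smul (c : F) (X : UT3 F) :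
    antitranspose (c • X) = c • antitranspose X := rfl

theorem antitranspose_mul (X Y : UT3 F) :
    antitranspose (X * Y) = antitranspose Y * antitranspose X :=
  Subtype.ext (Matrix.antitranspose_mul _ _)

theorem isIdempotentElem_diag {A : UT3 F} (hA : IsIdempotentElem A) :
    IsIdempotentElem (A : Matrix (Fin 3) (Fin 3) F).diag := by
  rw [IsIdempotentElem, ← (isUpperTriangular A).diag_mul (isUpperTriangular A)]
  exact congrArg (fun X : UT3 F => (X : Matrix (Fin 3) (Fin 3) F).diag) hA

theorem exists_unit_conj_eq_diagonal {A : UT3 F} (hA : IsIdempotentElem A) :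
    ∃ u : (UT3 F)ˣ, ↑u * A * ↑u⁻¹ = diagonal (A : Matrix (Fin 3) (Fin 3) F).diag := by
  refine hA.exists_unit_conj_eq_of_isNilpotent_sub ?_ ?_
  · exact Subtype.ext ((diagonal_mul_diagonal _ _).trans
      (congrArg Matrix.diagonal (isIdempotentElem_diag hA).eq))
  · rw [← IsNilpotent.map_iff (f := (UT3 F).val) Subtype.val_injective]
    refine ⟨Fintype.card (Fin 3), IsUpperTriangular.pow_card_eq_zero ?_ ?_⟩
    · exact (isUpperTriangular A).sub (blockTriangular_diagonal _)
    · ext i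
      simp [diagonal]

theorem diagonal_one_sub_single_two :
    diagonal (1 - Pi.single 2 1) = (eU 0 0 (by decide) + eU 1 1 (by decide) : UT3 F) := by
  ext i j : 2
  fin_cases i <;> fin_cases j <;> simp [diagonal, eU]

theorem diagonal_one_sub_single_one :
    diagonal (1 - Pi.single 1 1) = (eU 0 0 (by decide) + eU 2 2 (by decide) : UT3 F) := by
  ext i j : 2
  fin_cases i <;> fin_cases j <;> simp [diagonal, eU]

theorem antitranspose_diagonal_one_sub_single_zero :
    antitranspose (diagonal (1 - Pi.single 0 1)) =
      (eU 0 0 (by decide) + eU 1 1 (by decide) : UT3 F) := by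
  ext i j : 2
  fin_cases i <;> fin_cases j <;> simp [antitranspose, diagonal, eU]

end UT3

/-- **Lemma 5(b).** Every rank-two idempotent of `U₃(F)` is mapped to `e₁₁ + e₂₂` or
`e₁₁ + e₃₃` by some automorphism or antiautomorphism of `U₃(F)`. -/
theorem idem_rank_two_conj (F : Type*) [Field F]
    (A : UT3 F) (hidem : A * A = A)
    (hrank : (A : Matrix (Fin 3) (Fin 3) F).rank = 2) :
    ∃ φ : UT3 F → UT3 F,
      ((∃ ψ : UT3 F ≃ₐ[F] UT3 F, φ = ⇑ψ) ∨
        (Function.Bijective φ ∧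
          (∀ X Y : UT3 F, φ (X + Y) = φ X + φ Y) ∧
          (∀ (c : F) (X : UT3 F), φ (c • X) = c • φ X) ∧
          (∀ X Y : UT3 F, φ (X * Y) = φ Y * φ X))) ∧
      (φ A = eU 0 0 (by decide) + eU 1 1 (by decide) ∨
        φ A = eU 0 0 (by decide) + eU 2 2 (by decide)) := by
  obtain ⟨u, hu⟩ := UT3.exists_unit_conj_eq_diagonal hidem
  have hrank_diag : (diagonal (A : Matrix (Fin 3) (Fin 3) F).diag).rank = 2 := by
    rw [← hrank, ← rank_subalgebra_units_conj u A, hu]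
    rfl
  obtain ⟨k, hk⟩ := exists_eq_one_sub_single_of_rank_diagonal (UT3.isIdempotentElem_diag hidem)
    (by rw [hrank_diag, Fintype.card_fin])
  let ψ : UT3 F ≃ₐ[F] UT3 F := MulSemiringAction.toAlgEquiv F (UT3 F) (ConjAct.toConjAct u)
  have hψA : ψ A = UT3.diagonal (1 - Pi.single k 1) := hk ▸ hu
  fin_cases k
  · refine ⟨UT3.antitranspose ∘ ψ, Or.inr ⟨?_, ?_, ?_, ?_⟩, Or.inl ?_⟩
    · exact UT3.antitranspose_involutive.bijective.comp ψ.bijective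
    · intro X Y
      simp only [Function.comp_apply, map_add, UT3.antitranspose_add]
    · intro c X
      simp only [Function.comp_apply, map_smul, UT3.antitranspose_smul]
    · intro X Y
      simp only [Function.comp_apply, map_mul, UT3.antitranspose_mul]
    · rw [Function.comp_apply, hψA]
      exact UT3.antitranspose_diagonal_one_sub_single_zero
  · exact ⟨ψ, Or.inl ⟨ψ, rfl⟩, Or.inr (hψA.trans UT3.diagonal_one_sub_single_one)⟩
  · exact ⟨ψ, Or.inl ⟨ψ, rfl⟩, Or.inl (hψA.trans UT3.diagonal_one_sub_single_two)⟩
end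

section
/- Let F be a field and let R : U₃(F) → U₃(F) be any F-linear operator such that R(e₁₂) = R(e₁₃) = 0 and R(e₁₁), R(e₂₂), R(e₃₃), R(e₂₃) all lie in the linear span of e₁₂ and e₁₃. Then R is a Rota–Baxter operator of weight 0 on U₃(F). -/
set_option synthInstance.maxHeartbeats 1000000
set_option maxHeartbeats 1000000

/-!
The span `S` of `e₁₂` and `e₁₃` is a two-sided ideal of `U₃(F)` with `S² = 0`. The hypotheses
say that `R` kills `S` and maps a basis, hence all of `U₃(F)`, into `S`. So `R x * R y ∈ S² = 0`,
while `R x * y + x * R y ∈ S` is killed by `R`: both sides of the Rota–Baxter identity vanish.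
-/

section SquareZero

variable {F A : Type*} [Field F] [Ring A] [Algebra F A]

theorem isRotaBaxterW0_of_range_le_le_ker (R : A →ₗ[F] A) (I : Submodule F A)
    (mul_mem_left : ∀ x {a}, a ∈ I → x * a ∈ I) (mul_mem_right : ∀ {a}, a ∈ I → ∀ y, a * y ∈ I)
    (mul_eq_zero : ∀ {a b}, a ∈ I → b ∈ I → a * b = 0)
    (range_le : LinearMap.range R ≤ I) (le_ker : I ≤ LinearMap.ker R) :
    IsRotaBaxterW0 R := by
  intro x y
  have hx : R x ∈ I := range_le ⟨x, rfl⟩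
  have hy : R y ∈ I := range_le ⟨y, rfl⟩
  rw [mul_eq_zero hx hy, eq_comm]
  exact le_ker (I.add_mem (mul_mem_right hx y) (mul_mem_left x hy))

end SquareZero

namespace UT3

variable {F : Type*} [Field F]

local notation "e₁₁" => eU 0 0 (by decide)
local notation "e₁₂" => eU 0 1 (by decide)
local notation "e₁₃" => eU 0 2 (by decide)
local notation "e₂₂" => eU 1 1 (by decide)
local notation "e₂₃" => eU 1 2 (by decide)
local notation "e₃₃" => eU 2 2 (by decide)

theorem eq_sum_smul_eU (x : UT3 F) :
    x = x.1 0 0 • e₁₁ + x.1 0 1 • e₁₂ + x.1 0 2 • e₁₃ + x.1 1 1 • e₂₂ + x.1 1 2 • e₂₃ +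
      x.1 2 2 • e₃₃ := by
  have h10 := x.2 1 0 (by decide)
  have h20 := x.2 2 0 (by decide)
  have h21 := x.2 2 1 (by decide)
  ext i j
  fin_cases i <;> fin_cases j <;> simp [eU, Matrix.single, h10, h20, h21]

theorem span_eU_eq_top :
    Submodule.span F {e₁₁, e₁₂, e₁₃, e₂₂, e₂₃, e₃₃} = (⊤ : Submodule F (UT3 F)) := by
  refine eq_top_iff.2 fun x _ => ?_
  rw [eq_sum_smul_eU x]
  refine Submodule.add_mem _ (Submodule.add_mem _ (Submodule.add_mem _ (Submodule.add_mem _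
    (Submodule.add_mem _ ?_ ?_) ?_) ?_) ?_) ?_ <;>
    exact Submodule.smul_mem _ _ (Submodule.subset_span (by simp))

theorem smul_e₁₂_add_smul_e₁₃_mul (s t : F) (y : UT3 F) :
    (s • e₁₂ + t • e₁₃) * y = (s * y.1 1 1) • e₁₂ + (s * y.1 1 2 + t * y.1 2 2) • e₁₃ := by
  have h10 := y.2 1 0 (by decide)
  have h20 := y.2 2 0 (by decide)
  have h21 := y.2 2 1 (by decide)
  ext i j
  fin_cases i <;> fin_cases j <;>
    simp [eU, Matrix.mul_apply, Fin.sum_univ_three, Matrix.single, h10, h20, h21]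

theorem mul_smul_e₁₂_add_smul_e₁₃ (x : UT3 F) (s t : F) :
    x * (s • e₁₂ + t • e₁₃) = (x.1 0 0 * s) • e₁₂ + (x.1 0 0 * t) • e₁₃ := by
  have h10 := x.2 1 0 (by decide)
  have h20 := x.2 2 0 (by decide)
  ext i j
  fin_cases i <;> fin_cases j <;>
    simp [eU, Matrix.mul_apply, Matrix.single, h10, h20]

variable (F) in
def strictFirstRowIdeal : Submodule F (UT3 F) := Submodule.span F {e₁₂, e₁₃}

theorem mem_strictFirstRowIdeal {z : UT3 F} :
    z ∈ strictFirstRowIdeal F ↔ ∃ s t : F, s • e₁₂ + t • e₁₃ = z :=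
  Submodule.mem_span_pair

theorem mul_mem_strictFirstRowIdeal_left (x : UT3 F) {a : UT3 F} (ha : a ∈ strictFirstRowIdeal F) :
    x * a ∈ strictFirstRowIdeal F := by
  obtain ⟨s, t, rfl⟩ := mem_strictFirstRowIdeal.1 ha
  exact mem_strictFirstRowIdeal.2 ⟨_, _, (mul_smul_e₁₂_add_smul_e₁₃ x s t).symm⟩

theorem mul_mem_strictFirstRowIdeal_right {a : UT3 F} (ha : a ∈ strictFirstRowIdeal F) (y : UT3 F) :
    a * y ∈ strictFirstRowIdeal F := by
  obtain ⟨s, t, rfl⟩ := mem_strictFirstRowIdeal.1 ha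
  exact mem_strictFirstRowIdeal.2 ⟨_, _, (smul_e₁₂_add_smul_e₁₃_mul s t y).symm⟩

theorem mul_eq_zero_of_mem_strictFirstRowIdeal {a b : UT3 F} (ha : a ∈ strictFirstRowIdeal F)
    (hb : b ∈ strictFirstRowIdeal F) : a * b = 0 := by
  obtain ⟨s, t, rfl⟩ := mem_strictFirstRowIdeal.1 ha
  obtain ⟨u, v, rfl⟩ := mem_strictFirstRowIdeal.1 hb
  rw [smul_e₁₂_add_smul_e₁₃_mul]
  simp [eU, Matrix.single]

end UT3

/-- Any linear operator `R` on `U₃(F)` with `R(e₁₂) = R(e₁₃) = 0` and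
`R(e₁₁), R(e₂₂), R(e₃₃), R(e₂₃) ∈ L(e₁₂, e₁₃)` is a Rota–Baxter operator of weight 0. -/
theorem rotaBaxter_span_e12_e13 (F : Type*) [Field F] (R : UT3 F →ₗ[F] UT3 F)
    (h12 : R (eU 0 1 (by decide)) = 0)
    (h13 : R (eU 0 2 (by decide)) = 0)
    (h11 : R (eU 0 0 (by decide)) ∈
      Submodule.span F {eU 0 1 (by decide), eU 0 2 (by decide)})
    (h22 : R (eU 1 1 (by decide)) ∈
      Submodule.span F {eU 0 1 (by decide), eU 0 2 (by decide)})
    (h33 : R (eU 2 2 (by decide)) ∈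
      Submodule.span F {eU 0 1 (by decide), eU 0 2 (by decide)})
    (h23 : R (eU 1 2 (by decide)) ∈
      Submodule.span F {eU 0 1 (by decide), eU 0 2 (by decide)}) :
    IsRotaBaxterW0 R := by
  refine isRotaBaxterW0_of_range_le_le_ker R (UT3.strictFirstRowIdeal F)
    UT3.mul_mem_strictFirstRowIdeal_left UT3.mul_mem_strictFirstRowIdeal_right
    UT3.mul_eq_zero_of_mem_strictFirstRowIdeal ?_ ?_
  · rw [LinearMap.range_eq_map, ← UT3.span_eU_eq_top, Submodule.map_span_le]
    simp only [Set.mem_insert_iff, Set.mem_singleton_iff]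
    rintro x (rfl | rfl | rfl | rfl | rfl | rfl)
    exacts [h11, h12 ▸ zero_mem _, h13 ▸ zero_mem _, h22, h23, h33]
  · rw [UT3.strictFirstRowIdeal, Submodule.span_le]
    rintro x (rfl | rfl) <;> assumption
end

section
/- Let F be a field. The F-linear operator R on U₃(F) defined on the basis by R(e₁₁) = R(e₂₂) = R(e₃₃) = R(e₁₂) = 0, R(e₁₃) = e₁₂, and R(e₂₃) = e₂₂ is a Rota–Baxter operator of weight 0 on U₃(F). -/
set_option synthInstance.maxHeartbeats 1000000
set_option maxHeartbeats 1000000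

/-! On `U₃(F)` the operator is `x ↦ P x N` with `P = e₁₁ + e₂₂` and `N = e₃₂`
(`Matrix.single 2 1 1`), computed in the full matrix ring. For any idempotent `P` and
square-zero `N` with `N P = N`, the sandwich `x ↦ P x N` satisfies the weight-zero
Rota–Baxter identity: both sides reduce to `P x N y N`. -/

theorem sandwich_mul_sandwich {A : Type*} [Ring A] {p n : A}
    (hp : p * p = p) (hn : n * n = 0) (hnp : n * p = n) (x y : A) :
    p * x * n * (p * y * n) = p * (p * x * n * y + x * (p * y * n)) * n := by
  have hleft : p * x * n * (p * y * n) = p * x * n * y * n := by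
    rw [← mul_assoc, ← mul_assoc, mul_assoc (p * x) n p, hnp]
  have hright : p * (x * (p * y * n)) * n = 0 := by
    simp only [mul_assoc, hn, mul_zero]
  rw [mul_add, add_mul, hright, add_zero, hleft]
  simp only [← mul_assoc, hp]

namespace UT3

variable {F : Type*} [Field F]

theorem eq_sum_smul_eU_s15 (x : UT3 F) :
    x = x.1 0 0 • eU 0 0 (by decide) + x.1 0 1 • eU 0 1 (by decide) +
        x.1 0 2 • eU 0 2 (by decide) + x.1 1 1 • eU 1 1 (by decide) +
        x.1 1 2 • eU 1 2 (by decide) + x.1 2 2 • eU 2 2 (by decide) := by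
  have h10 := x.2 1 0 (by decide)
  have h20 := x.2 2 0 (by decide)
  have h21 := x.2 2 1 (by decide)
  ext i j
  fin_cases i <;> fin_cases j <;>
    simp [eU, Matrix.single, h10, h20, h21]

theorem smul_eU_add_smul_eU_eq_sandwich (x : UT3 F) :
    ((x.1 0 2 • eU 0 1 (by decide) + x.1 1 2 • eU 1 1 (by decide) : UT3 F) :
        Matrix (Fin 3) (Fin 3) F) =
      (1 - Matrix.single 2 2 1) * x.1 * Matrix.single 2 1 1 := by
  ext i j
  fin_cases i <;> fin_cases j <;>
    simp [eU, Matrix.mul_apply, Matrix.single, Matrix.one_apply]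

end UT3

/-- The operator (R7): `R(e₁₁) = R(e₂₂) = R(e₃₃) = R(e₁₂) = 0`, `R(e₁₃) = e₁₂`,
`R(e₂₃) = e₂₂` is a Rota–Baxter operator of weight 0 on `U₃(F)`. -/
theorem rotaBaxter_R7 (F : Type*) [Field F] (R : UT3 F →ₗ[F] UT3 F)
    (h11 : R (eU 0 0 (by decide)) = 0)
    (h22 : R (eU 1 1 (by decide)) = 0)
    (h33 : R (eU 2 2 (by decide)) = 0)
    (h12 : R (eU 0 1 (by decide)) = 0)
    (h13 : R (eU 0 2 (by decide)) = eU 0 1 (by decide))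
    (h23 : R (eU 1 2 (by decide)) = eU 1 1 (by decide)) :
    IsRotaBaxterW0 R := by
  have hR : ∀ z : UT3 F, (R z : Matrix (Fin 3) (Fin 3) F) =
      (1 - Matrix.single 2 2 1) * z.1 * Matrix.single 2 1 1 := by
    intro z
    conv_lhs => rw [UT3.eq_sum_smul_eU_s15 z]
    simp only [map_add, map_smul, h11, h22, h33, h12, h13, h23, smul_zero, zero_add, add_zero]
    exact UT3.smul_eU_add_smul_eU_eq_sandwich z
  intro x y
  apply Subtype.ext
  simp only [Subalgebra.coe_mul, Subalgebra.coe_add, hR]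
  refine sandwich_mul_sandwich ?_ ?_ ?_ x.1 y.1 <;>
    ext i j <;> fin_cases i <;> fin_cases j <;>
    simp [Matrix.mul_apply, Matrix.single, Matrix.one_apply]
end

section
/- Let A be a unital associative finite-dimensional algebra over a field F and let R be a Rota–Baxter operator of weight 0 on A. Then the image of R contains no invertible element of A. -/
/-!
The range of a weight-0 Rota–Baxter operator `R` is closed under multiplication, since
`R x * R y = R (R x * y + x * R y)`. In a finite-dimensional algebra, a multiplicatively closed
subspace containing a unit `u` contains `1`: left multiplication by `u` is injective on it, hence
surjective, so `u = u * s` for some `s` in it, and `s = 1`. Finally `1 = R t` is impossible, because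
the Rota–Baxter identity for `x = y = t` reads `1 = R (t + t) = 1 + 1`.
-/

theorem NonUnitalSubalgebra.one_mem_of_isUnit {F A : Type*} [Field F] [Ring A] [Algebra F A]
    [FiniteDimensional F A] (S : NonUnitalSubalgebra F A) {u : A} (hu : IsUnit u) (huS : u ∈ S) :
    (1 : A) ∈ S := by
  let mulLeft : S.toSubmodule →ₗ[F] S.toSubmodule :=
    (LinearMap.mulLeft F u).restrict fun _ hx => S.mul_mem huS hx
  have mulLeft_injective : Function.Injective mulLeft := fun x y hxy =>
    Subtype.ext (hu.mul_left_cancel (congrArg Subtype.val hxy))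
  obtain ⟨s, hs⟩ := LinearMap.injective_iff_surjective.mp mulLeft_injective ⟨u, huS⟩
  have hs_one : (s : A) = 1 := hu.mul_left_cancel <| by
    rw [mul_one]
    exact congrArg Subtype.val hs
  exact hs_one ▸ s.2

section RotaBaxter

variable {F A : Type*} [CommSemiring F] [Ring A] [Module F A] (R : A →ₗ[F] A)

def rotaBaxterRange (hR : ∀ x y : A, R x * R y = R (R x * y + x * R y)) :
    NonUnitalSubalgebra F A where
  toSubmodule := LinearMap.range R
  mul_mem' := by
    rintro _ _ ⟨x, rfl⟩ ⟨y, rfl⟩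
    exact ⟨R x * y + x * R y, (hR x y).symm⟩

theorem rotaBaxter_ne_one [Nontrivial A] (hR : ∀ x y : A, R x * R y = R (R x * y + x * R y))
    (t : A) : R t ≠ 1 := by
  intro ht
  have h := hR t t
  simp only [ht, one_mul, mul_one] at h
  rw [map_add, ht] at h
  exact one_ne_zero (right_eq_add.mp h)

end RotaBaxter

/-- If `R` is a Rota–Baxter operator of weight 0 on a unital associative finite-dimensional
algebra `A` over a field `F`, then the image of `R` contains no invertible element of `A`. -/
theorem rotaBaxter_range_no_unit {F A : Type*} [Field F] [Ring A] [Algebra F A]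
    [Nontrivial A] [FiniteDimensional F A]
    (R : A →ₗ[F] A) (hR : ∀ x y : A, R x * R y = R (R x * y + x * R y)) :
    ∀ u ∈ LinearMap.range R, ¬ IsUnit u := by
  intro u huR hu
  obtain ⟨t, ht⟩ := (rotaBaxterRange R hR).one_mem_of_isUnit hu huR
  exact rotaBaxter_ne_one R hR t ht
end
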